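/- arXiv:2302.13604 — 9 statements merged into one kernel-verified Lean document; each statement's English description precedes it below -/
import Mathlib

section
/- If a topological space X is not Hausdorff and is 2-homogeneous (i.e., for any points x1, x2, y1, y2 in X there is a homeomorphism h of X with h(x1)=y1 and h(x2)=y2), then X is hyperconnected (any two nonempty open sets intersect). -/
/-- A space is 2-homogeneous if for any points `x1, x2, y1, y2` there is a
self-homeomorphism `h` with `h x1 = y1` and `h x2 = y2`. -/
def TwoHomogeneous (X : Type*) [TopologicalSpace X] : Prop :=
  ∀ x1 x2 y1 y2 : X, ∃ h : X ≃ₜ X, h x1 = y1 ∧ h x2 = y2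

/-- A space is hyperconnected if any two nonempty open sets intersect. -/
def Hyperconnected (X : Type*) [TopologicalSpace X] : Prop :=
  ∀ U V : Set X, IsOpen U → IsOpen V → U.Nonempty → V.Nonempty → (U ∩ V).Nonempty

/-- A space is Hausdorff if any two distinct points have disjoint open
neighbourhoods. -/
def HausdorffSpace (X : Type*) [TopologicalSpace X] : Prop :=
  ∀ x y : X, x ≠ y → ∃ U V : Set X, IsOpen U ∧ IsOpen V ∧ x ∈ U ∧ y ∈ V ∧ U ∩ V = ∅

theorem stmt0 (X : Type*) [TopologicalSpace X]
    (hnot : ¬ HausdorffSpace X) (hhom : TwoHomogeneous X) :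
    Hyperconnected X := by
  unfold HausdorffSpace at hnot
  push_neg at hnot
  obtain ⟨a, b, hab, hA⟩ := hnot
  intro U V hU hV ⟨u, hu⟩ ⟨v, hv⟩
  by_cases huv : u = v
  · exact ⟨u, hu, huv ▸ hv⟩
  obtain ⟨h, ha, hb⟩ := hhom a b u v
  have key : (h ⁻¹' U ∩ h ⁻¹' V).Nonempty := by
    exact hA (h ⁻¹' U) (h ⁻¹' V) (hU.preimage h.continuous)
      (hV.preimage h.continuous) (by simp [ha, hu]) (by simp [hb, hv])
  obtain ⟨z, hz1, hz2⟩ := key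
  exact ⟨h z, hz1, hz2⟩
end

section
/- For every n ≥ 2, if X is an n-Hausdorff space with at least n points, then X is not hyperconnected. -/
/-- A space is `n`-Hausdorff if any `n` distinct points admit open
neighbourhoods with empty total intersection. -/
def NHausdorff (n : ℕ) (X : Type*) [TopologicalSpace X] : Prop :=
  ∀ f : Fin n ↪ X, ∃ U : Fin n → Set X,
    (∀ i, IsOpen (U i) ∧ f i ∈ U i) ∧ ⋂ i, U i = ∅

theorem stmt3 (n : ℕ) (hn : 2 ≤ n) (X : Type*) [TopologicalSpace X]
    (hpts : ∃ _ : Fin n ↪ X, True) (hX : NHausdorff n X) :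
    ¬ Hyperconnected X := by
  intro hyp
  obtain ⟨f, -⟩ := hpts
  obtain ⟨U, hU, hempty⟩ := hX f
  -- any finite intersection of nonempty opens is open and nonempty
  have key : ∀ s : Finset (Fin n), IsOpen (⋂ i ∈ s, U i) ∧ (⋂ i ∈ s, U i).Nonempty := by
    intro s
    induction s using Finset.induction with
    | empty =>
      haveI : NeZero n := ⟨by omega⟩
      simp only [Finset.notMem_empty, Set.iInter_of_empty, Set.iInter_univ]
      exact ⟨isOpen_univ, ⟨f 0, trivial⟩⟩
    | @insert a s ha ih =>
      constructor
      · simp only [Finset.mem_insert, Set.iInter_iInter_eq_or_left]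
        exact ((hU a).1).inter ih.1
      · simp only [Finset.mem_insert, Set.iInter_iInter_eq_or_left]
        exact hyp _ _ (hU a).1 ih.1 ⟨f a, (hU a).2⟩ ih.2
  have : (⋂ i, U i).Nonempty := by
    have h := (key Finset.univ).2
    simpa using h
  rw [hempty] at this
  exact Set.not_nonempty_empty this
end

section
/- Let X be the set of natural numbers with the topology generated by the base {{n, n+1} : n even}. Then X is 3-Hausdorff and homogeneous, but not Hausdorff. -/
/-- The natural numbers with the topology generated by the base
`{{2k, 2k+1} : k ∈ ℕ}`. -/
def PairedNat : Type := ℕ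

instance : TopologicalSpace PairedNat :=
  TopologicalSpace.generateFrom {B : Set PairedNat | ∃ k : ℕ, B = {2 * k, 2 * k + 1}}

/-- A space is 3-Hausdorff if any three distinct points admit open
neighbourhoods with empty total intersection. -/
def ThreeHausdorff (X : Type*) [TopologicalSpace X] : Prop :=
  ∀ x y z : X, x ≠ y → x ≠ z → y ≠ z →
    ∃ U V W : Set X, IsOpen U ∧ IsOpen V ∧ IsOpen W ∧
      x ∈ U ∧ y ∈ V ∧ z ∈ W ∧ U ∩ V ∩ W = ∅

/-- A space is homogeneous if for all `x, y` some self-homeomorphism maps `x`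
to `y`. -/
def Homogeneous (X : Type*) [TopologicalSpace X] : Prop :=
  ∀ x y : X, ∃ h : X ≃ₜ X, h x = y

namespace PN

open TopologicalSpace Topology

def S : Set (Set ℕ) := {B : Set ℕ | ∃ k : ℕ, B = {2 * k, 2 * k + 1}}

def t : TopologicalSpace ℕ := generateFrom S

lemma open_pair (k : ℕ) : IsOpen[t] ({2 * k, 2 * k + 1} : Set ℕ) :=
  TopologicalSpace.GenerateOpen.basic _ ⟨k, rfl⟩

lemma mem_partner {U : Set ℕ} (hU : IsOpen[t] U) :
    ∀ n ∈ U, (if n % 2 = 0 then n + 1 else n - 1) ∈ U := by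
  have h : GenerateOpen S U := hU
  clear hU
  induction h with
  | basic s hs =>
      obtain ⟨k, rfl⟩ := hs
      intro n hn
      simp only [Set.mem_insert_iff, Set.mem_singleton_iff] at *
      split_ifs <;> omega
  | univ => intro n _; trivial
  | inter s u hs hu ihs ihu => exact fun n hn => ⟨ihs n hn.1, ihu n hn.2⟩
  | sUnion K hK ih => rintro n ⟨s, hs, hn⟩; exact ⟨s, hs, ih s hs n hn⟩

def G (x y n : ℕ) : ℕ :=
  if n / 2 = x / 2 then 2 * (y / 2) + (n % 2 + x % 2 + y % 2) % 2
  else if n / 2 = y / 2 then 2 * (x / 2) + (n % 2 + x % 2 + y % 2) % 2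
  else n

lemma G_inv (x y : ℕ) : Function.Involutive (G x y) := by
  intro n; unfold G; split_ifs <;> omega

lemma G_self (x y : ℕ) : G x y x = y := by unfold G; split_ifs <;> omega

lemma G_preimage (x y k : ℕ) :
    G x y ⁻¹' ({2 * k, 2 * k + 1} : Set ℕ) =
      ({2 * (if k = y / 2 then x / 2 else if k = x / 2 then y / 2 else k),
       2 * (if k = y / 2 then x / 2 else if k = x / 2 then y / 2 else k) + 1} : Set ℕ) := by
  ext n
  simp only [Set.mem_preimage, Set.mem_insert_iff, Set.mem_singleton_iff]
  unfold G; split_ifs <;> omega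

lemma G_continuous (x y : ℕ) : Continuous[t, t] (G x y) := by
  show Continuous[t, generateFrom S] (G x y)
  rw [continuous_generateFrom_iff]
  rintro s ⟨k, rfl⟩
  rw [G_preimage]
  exact open_pair _

def GHomeo (x y : ℕ) : @Homeomorph ℕ ℕ t t :=
  @Homeomorph.mk ℕ ℕ t t (Function.Involutive.toPerm _ (G_inv x y))
    (G_continuous x y) (G_continuous x y)

lemma three (x y z : ℕ) (hxy : x ≠ y) (hxz : x ≠ z) (hyz : y ≠ z) :
    ∃ U V W : Set ℕ, IsOpen[t] U ∧ IsOpen[t] V ∧ IsOpen[t] W ∧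
      x ∈ U ∧ y ∈ V ∧ z ∈ W ∧ U ∩ V ∩ W = ∅ := by
  refine ⟨{2 * (x / 2), 2 * (x / 2) + 1}, {2 * (y / 2), 2 * (y / 2) + 1},
    {2 * (z / 2), 2 * (z / 2) + 1}, open_pair _, open_pair _, open_pair _, ?_, ?_, ?_, ?_⟩
  · simp only [Set.mem_insert_iff, Set.mem_singleton_iff]; omega
  · simp only [Set.mem_insert_iff, Set.mem_singleton_iff]; omega
  · simp only [Set.mem_insert_iff, Set.mem_singleton_iff]; omega
  · ext w
    simp only [Set.mem_inter_iff, Set.mem_insert_iff, Set.mem_singleton_iff,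
      Set.mem_empty_iff_false, iff_false, not_and]
    omega

end PN

theorem stmt6 : ThreeHausdorff PairedNat ∧ Homogeneous PairedNat ∧
    ¬ HausdorffSpace PairedNat := by
  refine ⟨?_, ?_, ?_⟩
  · exact fun x y z hxy hxz hyz => PN.three x y z hxy hxz hyz
  · intro x y
    exact ⟨PN.GHomeo x y, by exact PN.G_self x y⟩
  · intro h
    obtain ⟨U, V, hU, hV, h0, h1, hUV⟩ := h ((0:ℕ) : PairedNat) ((1:ℕ) : PairedNat) Nat.zero_ne_one
    have h1U : (1 : ℕ) ∈ U := by
      have := PN.mem_partner hU 0 h0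
      norm_num at this
      exact this
    have : (1 : ℕ) ∈ U ∩ V := ⟨h1U, h1⟩
    rw [hUV] at this
    exact this
end

section
/- Let X = ℤ × ℤ with the topology generated by the subbase consisting of the sets U_{j,k} = {(x,y) : x > j or y > k} and V_{j,k} = {(x,y) : x < j or y < k} for j, k ∈ ℤ. Then X is T1 and hyperconnected. -/
/-- `ℤ × ℤ` with the topology generated by the subbase consisting of the sets
`U_{j,k} = {(x,y) : x > j ∨ y > k}` and `V_{j,k} = {(x,y) : x < j ∨ y < k}`. -/
def SlopedPlane : Type := ℤ × ℤ

instance : TopologicalSpace SlopedPlane :=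
  TopologicalSpace.generateFrom
    {S : Set SlopedPlane | ∃ j k : ℤ,
      S = {p : ℤ × ℤ | p.1 > j ∨ p.2 > k} ∨ S = {p : ℤ × ℤ | p.1 < j ∨ p.2 < k}}

/-- A space is T1 if all singletons are closed. -/
def T1 (X : Type*) [TopologicalSpace X] : Prop := ∀ x : X, IsClosed ({x} : Set X)

/-!
Every subbasic set contains the points `(n, -n)` for all large `n`. Since this property
survives finite intersections and arbitrary unions of nonempty sets, every nonempty open
set eventually contains the antidiagonal ray, so any two of them meet. Each singleton
`{(a, b)}` is the complement of `U_{a,b} ∪ V_{a,b}`.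
-/

open Filter TopologicalSpace

theorem mem_filter_of_generateOpen {α : Type*} {g : Set (Set α)} {F : Filter α}
    (hg : ∀ s ∈ g, s ∈ F) {U : Set α} (hU : GenerateOpen g U) (hne : U.Nonempty) :
    U ∈ F := by
  induction hU with
  | basic s hs => exact hg s hs
  | univ => exact univ_mem
  | inter U V _ _ ihU ihV =>
    exact inter_mem (ihU (hne.mono Set.inter_subset_left)) (ihV (hne.mono Set.inter_subset_right))
  | sUnion S _ ih =>
    obtain ⟨p, t, ht, hpt⟩ := hne
    exact mem_of_superset (ih t ht ⟨p, hpt⟩) (Set.subset_sUnion_of_mem ht)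

theorem hyperconnected_of_isOpen_mem {X : Type*} [TopologicalSpace X] (F : Filter X) [F.NeBot]
    (hF : ∀ U : Set X, IsOpen U → U.Nonempty → U ∈ F) : Hyperconnected X :=
  fun U V hU hV hUne hVne => nonempty_of_mem (inter_mem (hF U hU hUne) (hF V hV hVne))

namespace SlopedPlane

noncomputable def antidiagonalAtTop : Filter SlopedPlane :=
  map (fun n : ℤ => ((n, -n) : ℤ × ℤ)) atTop

instance : antidiagonalAtTop.NeBot := map_neBot

theorem isOpen_mem_antidiagonalAtTop {U : Set SlopedPlane} (hU : IsOpen U)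
    (hne : U.Nonempty) : U ∈ antidiagonalAtTop := by
  refine mem_filter_of_generateOpen ?_ hU hne
  rintro s ⟨j, k, rfl | rfl⟩
  · exact mem_map.2 <| (eventually_gt_atTop j).mono fun n hn => Or.inl hn
  · exact mem_map.2 <| (eventually_gt_atTop (-k)).mono fun n hn => Or.inr (neg_lt.mp hn)

theorem compl_singleton_eq (a b : ℤ) :
    ({((a, b) : SlopedPlane)} : Set SlopedPlane)ᶜ =
      {p : ℤ × ℤ | p.1 > a ∨ p.2 > b} ∪ {p : ℤ × ℤ | p.1 < a ∨ p.2 < b} := by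
  ext ⟨x, y⟩
  change ¬((x, y) = (a, b)) ↔ (x > a ∨ y > b) ∨ (x < a ∨ y < b)
  rw [Prod.mk.injEq]
  omega

theorem isClosed_singleton (a b : ℤ) : IsClosed ({((a, b) : SlopedPlane)} : Set SlopedPlane) := by
  rw [← isOpen_compl_iff, compl_singleton_eq]
  exact IsOpen.union (isOpen_generateFrom_of_mem ⟨a, b, Or.inl rfl⟩)
    (isOpen_generateFrom_of_mem ⟨a, b, Or.inr rfl⟩)

end SlopedPlane

theorem stmt7 : T1 SlopedPlane ∧ Hyperconnected SlopedPlane :=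
  ⟨fun p => SlopedPlane.isClosed_singleton p.1 p.2,
    hyperconnected_of_isOpen_mem _ fun _ => SlopedPlane.isOpen_mem_antidiagonalAtTop⟩
end

section
/- For every topological space X and every natural number n ≥ 1, p_n(X) = c(X), where p_n(X) is the supremum of cardinalities of point-(≤ n)-finite families of nonempty open sets and c(X) is the cellularity (all cardinal functions taken at least ω). -/
open Cardinal Set

/-- The cellularity of `X`: the supremum of the cardinalities of pairwise
disjoint families of nonempty open sets, taken at least `ℵ₀`. -/
noncomputable def cellularity (X : Type u) [TopologicalSpace X] : Cardinal.{u} :=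
  max ℵ₀ (⨆ 𝒰 : {𝒰 : Set (Set X) //
    (∀ U ∈ 𝒰, IsOpen U ∧ U.Nonempty) ∧ 𝒰.PairwiseDisjoint id}, #𝒰.1)

/-- `B` is a local π-base at `x`: a family of nonempty open sets such that every
open neighbourhood of `x` contains a member of `B`. -/
def IsLocalPiBase {X : Type u} [TopologicalSpace X] (x : X) (B : Set (Set X)) : Prop :=
  (∀ U ∈ B, IsOpen U ∧ U.Nonempty) ∧ ∀ V : Set X, IsOpen V → x ∈ V → ∃ U ∈ B, U ⊆ V

/-- The π-character of `X`: the supremum over `x ∈ X` of the least cardinality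
of a local π-base at `x`, taken at least `ℵ₀`. -/
noncomputable def piCharacter (X : Type u) [TopologicalSpace X] : Cardinal.{u} :=
  max ℵ₀ (⨆ x : X, sInf {κ | ∃ B : Set (Set X), IsLocalPiBase x B ∧ #B = κ})

/-- A family `𝒰` of nonempty open sets is point-(≤ n)-finite if every point
belongs to at most `n` members of `𝒰`. -/
def PointLeNFinite {X : Type u} [TopologicalSpace X] (n : ℕ) (𝒰 : Set (Set X)) : Prop :=
  (∀ U ∈ 𝒰, IsOpen U ∧ U.Nonempty) ∧
  ∀ x : X, #{U : Set X // U ∈ 𝒰 ∧ x ∈ U} ≤ n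

/-- `p_n(X)`: the supremum of cardinalities of point-(≤ n)-finite families of
nonempty open sets, taken at least `ℵ₀`. -/
noncomputable def pNum (n : ℕ) (X : Type u) [TopologicalSpace X] : Cardinal.{u} :=
  max ℵ₀ (⨆ 𝒰 : {𝒰 : Set (Set X) // PointLeNFinite n 𝒰}, #𝒰.1)

/-! Induction on `n`. Given a point-(≤ n+1)-finite family `𝒰`, choose a maximal pairwise disjoint
subfamily `𝒟`; every other member meets some `D ∈ 𝒟`. Every point of `D` already lies in `D`, so
the traces `U ∩ D` of the members `U ≠ D` meeting `D` form a point-(≤ n)-finite family, of size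
at most `c(X)` by induction; and `U ↦ U ∩ D` is finite-to-one, since all `U` with the same trace
share a point. Hence `|𝒰| ≤ c(X) + c(X) · c(X) · ℵ₀ = c(X)`. -/

theorem Set.exists_subset_pairwiseDisjoint_maximal {ι α : Type*} [PartialOrder α] [OrderBot α]
    (s : Set ι) (f : ι → α) :
    ∃ t ⊆ s, t.PairwiseDisjoint f ∧ ∀ i ∈ s \ t, ∃ j ∈ t, ¬Disjoint (f i) (f j) := by
  obtain ⟨t, ⟨hts, htd⟩, hmax⟩ := zorn_subset {t | t ⊆ s ∧ t.PairwiseDisjoint f} fun c hc hchain =>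
    ⟨⋃₀ c, ⟨sUnion_subset fun t ht => (hc ht).1,
      (pairwiseDisjoint_sUnion hchain.directedOn).2 fun t ht => (hc ht).2⟩,
      fun _ => subset_sUnion_of_mem⟩
  refine ⟨t, hts, htd, fun i ⟨his, hit⟩ => ?_⟩
  by_contra! hdisj
  have hins : insert i t ⊆ t :=
    hmax ⟨insert_subset his hts, htd.insert fun j hj _ => hdisj j hj⟩ (subset_insert i t)
  exact hit (hins (mem_insert i t))

section Cellularity

variable {X : Type u} [TopologicalSpace X]

theorem aleph0_le_cellularity : ℵ₀ ≤ cellularity X := le_max_left _ _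

theorem mk_le_cellularity_of_pairwiseDisjoint {𝒟 : Set (Set X)}
    (hopen : ∀ U ∈ 𝒟, IsOpen U ∧ U.Nonempty) (hdisj : 𝒟.PairwiseDisjoint id) :
    #𝒟 ≤ cellularity X :=
  (le_ciSup bddAbove_of_small (⟨𝒟, hopen, hdisj⟩ : {𝒰 : Set (Set X) //
    (∀ U ∈ 𝒰, IsOpen U ∧ U.Nonempty) ∧ 𝒰.PairwiseDisjoint id})).trans (le_max_right _ _)

theorem pointLeNFinite_of_pairwiseDisjoint {n : ℕ} {𝒟 : Set (Set X)}
    (hopen : ∀ U ∈ 𝒟, IsOpen U ∧ U.Nonempty) (hdisj : 𝒟.PairwiseDisjoint id) (hn : 1 ≤ n) :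
    PointLeNFinite n 𝒟 := by
  refine ⟨hopen, fun x => ?_⟩
  have hsub : {U ∈ 𝒟 | x ∈ U}.Subsingleton := fun U ⟨hU, hxU⟩ V ⟨hV, hxV⟩ =>
    hdisj.elim hU hV (not_disjoint_iff.2 ⟨x, hxU, hxV⟩)
  exact (mk_le_one_iff_set_subsingleton.2 hsub).trans (by exact_mod_cast hn)

theorem le_pNum {n : ℕ} {𝒰 : Set (Set X)} (h : PointLeNFinite n 𝒰) : #𝒰 ≤ pNum n X :=
  (le_ciSup bddAbove_of_small (⟨𝒰, h⟩ : {𝒰 : Set (Set X) // PointLeNFinite n 𝒰})).trans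
    (le_max_right _ _)

theorem cellularity_le_pNum {n : ℕ} (hn : 1 ≤ n) : cellularity X ≤ pNum n X :=
  max_le (le_max_left _ _) <| ciSup_le' fun 𝒟 =>
    le_pNum (pointLeNFinite_of_pairwiseDisjoint 𝒟.2.1 𝒟.2.2 hn)

end Cellularity

namespace PointLeNFinite

variable {X : Type u} [TopologicalSpace X] {n : ℕ} {𝒰 : Set (Set X)}

theorem eq_empty (h : PointLeNFinite 0 𝒰) : 𝒰 = ∅ := by
  refine eq_empty_of_forall_notMem fun U hU => ?_
  obtain ⟨x, hx⟩ := (h.1 U hU).2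
  have : IsEmpty {V : Set X // V ∈ 𝒰 ∧ x ∈ V} := mk_eq_zero_iff.1 (nonpos_iff_eq_zero.1 (h.2 x))
  exact this.false ⟨U, hU, hx⟩

theorem image_inter (h : PointLeNFinite (n + 1) 𝒰) {D : Set X} (hD : D ∈ 𝒰) :
    PointLeNFinite n ((· ∩ D) '' {U ∈ 𝒰 | U ≠ D ∧ (U ∩ D).Nonempty}) := by
  refine ⟨?_, fun x => ?_⟩
  · rintro _ ⟨U, ⟨hU, -, hne⟩, rfl⟩
    exact ⟨(h.1 U hU).1.inter (h.1 D hD).1, hne⟩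
  by_cases hxD : x ∈ D
  · have hsub : {W ∈ (· ∩ D) '' {U ∈ 𝒰 | U ≠ D ∧ (U ∩ D).Nonempty} | x ∈ W} ⊆
        (· ∩ D) '' ({U ∈ 𝒰 | x ∈ U} \ {D}) := by
      rintro _ ⟨⟨U, ⟨hU, hUD, -⟩, rfl⟩, hx⟩
      exact ⟨U, ⟨⟨hU, hx.1⟩, hUD⟩, rfl⟩
    have hDx : {D} ⊆ {U ∈ 𝒰 | x ∈ U} := singleton_subset_iff.2 ⟨hD, hxD⟩
    have hcount : #↥({U ∈ 𝒰 | x ∈ U} \ {D}) + 1 ≤ n + 1 :=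
      calc #↥({U ∈ 𝒰 | x ∈ U} \ {D}) + 1 = #↥{U ∈ 𝒰 | x ∈ U} := by
            rw [← mk_singleton D, mk_sdiff_add_mk hDx]
        _ ≤ n + 1 := mod_cast h.2 x
    exact (mk_le_mk_of_subset hsub).trans (mk_image_le.trans (add_one_le_add_one_iff.1 hcount))
  · have : {W ∈ (· ∩ D) '' {U ∈ 𝒰 | U ≠ D ∧ (U ∩ D).Nonempty} | x ∈ W} = ∅ :=
      eq_empty_of_forall_notMem fun _ ⟨⟨_, _, hUW⟩, hx⟩ => hxD (hUW ▸ hx).2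
    exact (mk_set_eq_zero_iff.2 this).trans_le zero_le

theorem mk_le_mk_image_inter_mul_aleph0 (h : PointLeNFinite n 𝒰) {𝒮 : Set (Set X)}
    (h𝒮 : 𝒮 ⊆ 𝒰) {D : Set X} (hmeet : ∀ U ∈ 𝒮, (U ∩ D).Nonempty) :
    #𝒮 ≤ #((· ∩ D) '' 𝒮) * ℵ₀ := by
  have hcover : 𝒮 ⊆ ⋃ W ∈ (· ∩ D) '' 𝒮, {U ∈ 𝒮 | U ∩ D = W} := fun U hU =>
    mem_biUnion (mem_image_of_mem _ hU) ⟨hU, rfl⟩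
  have hfiber (W : ↥((· ∩ D) '' 𝒮)) : #↥{U ∈ 𝒮 | U ∩ D = W} ≤ ℵ₀ := by
    obtain ⟨_, ⟨U₀, hU₀, rfl⟩⟩ := W
    obtain ⟨x, hx⟩ := hmeet U₀ hU₀
    have hsub : {U ∈ 𝒮 | U ∩ D = U₀ ∩ D} ⊆ {U ∈ 𝒰 | x ∈ U} := fun U ⟨hU, hUD⟩ =>
      ⟨h𝒮 hU, (hUD ▸ hx : x ∈ U ∩ D).1⟩
    exact (mk_le_mk_of_subset hsub).trans ((h.2 x).trans natCast_lt_aleph0.le)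
  calc #𝒮 ≤ #↥(⋃ W ∈ (· ∩ D) '' 𝒮, {U ∈ 𝒮 | U ∩ D = W}) := mk_le_mk_of_subset hcover
    _ ≤ #((· ∩ D) '' 𝒮) * ⨆ W : ↥((· ∩ D) '' 𝒮), #↥{U ∈ 𝒮 | U ∩ D = W} := mk_biUnion_le _ _
    _ ≤ #((· ∩ D) '' 𝒮) * ℵ₀ := mul_le_mul_right (ciSup_le' hfiber) _

theorem mk_le_cellularity (h : PointLeNFinite n 𝒰) : #𝒰 ≤ cellularity X := by
  induction n generalizing 𝒰 with
  | zero => simp [h.eq_empty]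
  | succ n ih =>
    obtain ⟨𝒟, h𝒟𝒰, h𝒟disj, hmeet⟩ := 𝒰.exists_subset_pairwiseDisjoint_maximal id
    set c := cellularity X
    have hc : ℵ₀ ≤ c := aleph0_le_cellularity
    have h𝒟 : #𝒟 ≤ c := mk_le_cellularity_of_pairwiseDisjoint (fun U hU => h.1 U (h𝒟𝒰 hU)) h𝒟disj
    have hA (D : ↥𝒟) : #↥{U ∈ 𝒰 | U ≠ D ∧ (U ∩ D).Nonempty} ≤ c :=
      calc _ ≤ #((· ∩ D.1) '' {U ∈ 𝒰 | U ≠ D ∧ (U ∩ D).Nonempty}) * ℵ₀ :=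
            h.mk_le_mk_image_inter_mul_aleph0 (sep_subset _ _) fun _ hU => hU.2.2
        _ ≤ c * c := mul_le_mul' (ih (h.image_inter (h𝒟𝒰 D.2))) hc
        _ = c := mul_eq_self hc
    have hcover : 𝒰 ⊆ 𝒟 ∪ ⋃ D ∈ 𝒟, {U ∈ 𝒰 | U ≠ D ∧ (U ∩ D).Nonempty} := by
      intro U hU
      by_cases hU𝒟 : U ∈ 𝒟
      · exact Or.inl hU𝒟
      obtain ⟨D, hD, hUD⟩ := hmeet U ⟨hU, hU𝒟⟩
      exact Or.inr (mem_biUnion hD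
        ⟨hU, (ne_of_mem_of_not_mem hD hU𝒟).symm, not_disjoint_iff_nonempty_inter.1 hUD⟩)
    calc #𝒰 ≤ #𝒟 + #𝒟 * ⨆ D : ↥𝒟, #↥{U ∈ 𝒰 | U ≠ D ∧ (U ∩ D).Nonempty} :=
          (mk_le_mk_of_subset hcover).trans
            ((mk_union_le _ _).trans (add_le_add_right (mk_biUnion_le _ _) _))
      _ ≤ c + c * c := add_le_add h𝒟 (mul_le_mul' h𝒟 (ciSup_le' hA))
      _ = c := by rw [mul_eq_self hc, add_eq_self hc]

end PointLeNFinite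

theorem pNum_le_cellularity (n : ℕ) (X : Type u) [TopologicalSpace X] :
    pNum n X ≤ cellularity X :=
  max_le aleph0_le_cellularity (ciSup_le' fun 𝒰 => 𝒰.2.mk_le_cellularity)

theorem stmt9 (X : Type u) [TopologicalSpace X] (n : ℕ) (hn : 1 ≤ n) :
    pNum n X = cellularity X :=
  (pNum_le_cellularity n X).antisymm (cellularity_le_pNum hn)
end

section
/- For every quasiregular topological space X, the θ-density equals the density: d_θ(X) = d(X). -/
open Cardinal Set

/-- A space is quasiregular if every nonempty open set contains the closure of
some nonempty open set. -/
def Quasiregular (X : Type*) [TopologicalSpace X] : Prop :=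
  ∀ U : Set X, IsOpen U → U.Nonempty →
    ∃ V : Set X, IsOpen V ∧ V.Nonempty ∧ closure V ⊆ U

/-- The θ-closure of `A`: the set of points all of whose open neighbourhoods
have closure meeting `A`. -/
def thetaClosure {X : Type u} [TopologicalSpace X] (A : Set X) : Set X :=
  {x | ∀ V : Set X, IsOpen V → x ∈ V → (closure V ∩ A).Nonempty}

/-- The θ-density of `X`: the least cardinality of a θ-dense subset, taken at
least `ℵ₀`. -/
noncomputable def thetaDensity (X : Type u) [TopologicalSpace X] : Cardinal.{u} :=
  max ℵ₀ (sInf {κ | ∃ D : Set X, thetaClosure D = Set.univ ∧ #D = κ})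

/-- The density of `X`: the least cardinality of a dense subset, taken at
least `ℵ₀`. -/
noncomputable def density (X : Type u) [TopologicalSpace X] : Cardinal.{u} :=
  max ℵ₀ (sInf {κ | ∃ D : Set X, Dense D ∧ #D = κ})

theorem stmt14 (X : Type u) [TopologicalSpace X] (hqr : Quasiregular X) :
    thetaDensity X = density X := by
  have key : ∀ D : Set X, thetaClosure D = Set.univ ↔ Dense D := by
    intro D
    constructor
    · intro h
      rw [dense_iff_inter_open]
      intro U hU hne
      obtain ⟨V, hV, hVne, hcl⟩ := hqr U hU hne
      obtain ⟨x, hx⟩ := hVne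
      have hxθ : x ∈ thetaClosure D := h ▸ Set.mem_univ x
      obtain ⟨y, hy1, hy2⟩ := hxθ V hV hx
      exact ⟨y, hcl hy1, hy2⟩
    · intro h
      apply Set.eq_univ_of_forall
      intro x V hV hxV
      obtain ⟨y, hy1, hy2⟩ := dense_iff_inter_open.mp h V hV ⟨x, hxV⟩
      exact ⟨y, subset_closure hy1, hy2⟩
  unfold thetaDensity density
  congr 1
  congr 1
  ext κ
  exact exists_congr fun D => and_congr_left fun _ => key D
end

section
/- Let n ≥ 2. A topological space X is n-Hausdorff if and only if for every open ultrafilter 𝒰 on X, the set a𝒰 = ⋂{cl(U) : U ∈ 𝒰} has cardinality at most n−1. -/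
open Set Cardinal

/-- An open filter on `X`: a nonempty collection of nonempty open sets, closed
under finite intersections and upward closed in the lattice of open sets. -/
def IsOpenFilter {X : Type u} [TopologicalSpace X] (F : Set (Set X)) : Prop :=
  F.Nonempty ∧ (∀ U ∈ F, IsOpen U ∧ U.Nonempty) ∧
  (∀ U ∈ F, ∀ V ∈ F, U ∩ V ∈ F) ∧
  (∀ U ∈ F, ∀ V : Set X, IsOpen V → U ⊆ V → V ∈ F)

/-- An open ultrafilter on `X`: a maximal open filter. -/
def IsOpenUltrafilter {X : Type u} [TopologicalSpace X] (F : Set (Set X)) : Prop :=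
  IsOpenFilter F ∧ ∀ G : Set (Set X), IsOpenFilter G → F ⊆ G → G = F

/-- `adh F = a F = ⋂ {cl U : U ∈ F}`. -/
def adh {X : Type u} [TopologicalSpace X] (F : Set (Set X)) : Set X :=
  ⋂ U ∈ F, closure U

/-- Finite intersections of members of an open filter are members. -/
lemma openFilter_iInter {X : Type u} [TopologicalSpace X] {F : Set (Set X)}
    (hF : IsOpenFilter F) :
    ∀ (m : ℕ) (U : Fin (m + 1) → Set X), (∀ i, U i ∈ F) → ⋂ i, U i ∈ F := by
  intro m
  induction m with
  | zero =>
    intro U hU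
    have : ⋂ i, U i = U 0 := by
      ext x; simp [Fin.forall_fin_one]
    rw [this]; exact hU 0
  | succ m ih =>
    intro U hU
    have : ⋂ i, U i = U 0 ∩ ⋂ i : Fin (m + 1), U i.succ := by
      ext x; simp [Fin.forall_fin_succ]
    rw [this]
    exact hF.2.2.1 _ (hU 0) _ (ih (fun i => U i.succ) (fun i => hU i.succ))

/-- An open ultrafilter contains every open set meeting all of its members. -/
lemma openUltrafilter_mem {X : Type u} [TopologicalSpace X] {F : Set (Set X)}
    (hF : IsOpenUltrafilter F) {V : Set X} (hV : IsOpen V)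
    (hmeet : ∀ U ∈ F, (U ∩ V).Nonempty) : V ∈ F := by
  set G : Set (Set X) := {W | IsOpen W ∧ ∃ U ∈ F, U ∩ V ⊆ W} with hGdef
  obtain ⟨U₀, hU₀⟩ := hF.1.1
  have hVG : V ∈ G := ⟨hV, U₀, hU₀, inter_subset_right⟩
  have hGF : IsOpenFilter G := by
    refine ⟨⟨V, hVG⟩, ?_, ?_, ?_⟩
    · rintro W ⟨hWo, U, hU, hUW⟩
      exact ⟨hWo, (hmeet U hU).mono hUW⟩
    · rintro W₁ ⟨h1o, U₁, hU₁, h1⟩ W₂ ⟨h2o, U₂, hU₂, h2⟩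
      refine ⟨h1o.inter h2o, U₁ ∩ U₂, hF.1.2.2.1 _ hU₁ _ hU₂, ?_⟩
      intro x hx
      exact ⟨h1 ⟨hx.1.1, hx.2⟩, h2 ⟨hx.1.2, hx.2⟩⟩
    · rintro W ⟨hWo, U, hU, hUW⟩ W' hW'o hWW'
      exact ⟨hW'o, U, hU, hUW.trans hWW'⟩
  have hsub : F ⊆ G := by
    intro U hU
    exact ⟨(hF.1.2.1 U hU).1, U, hU, fun x hx => hx.1⟩
  have := hF.2 G hGF hsub
  rw [← this]; exact hVG

/-- Every open filter extends to an open ultrafilter. -/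
lemma exists_openUltrafilter {X : Type u} [TopologicalSpace X] {F₀ : Set (Set X)}
    (h : IsOpenFilter F₀) : ∃ F, IsOpenUltrafilter F ∧ F₀ ⊆ F := by
  obtain ⟨F, hF₀F, hmax⟩ := zorn_subset_nonempty {G | IsOpenFilter G ∧ F₀ ⊆ G}
    (fun c hcS hchain ⟨c₀, hc₀⟩ => by
      refine ⟨⋃₀ c, ⟨⟨?_, ?_, ?_, ?_⟩, ?_⟩, fun s hs => subset_sUnion_of_mem hs⟩
      · obtain ⟨U, hU⟩ := (hcS hc₀).1.1
        exact ⟨U, c₀, hc₀, hU⟩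
      · rintro U ⟨G, hG, hUG⟩
        exact (hcS hG).1.2.1 U hUG
      · rintro U ⟨G, hG, hUG⟩ V ⟨G', hG', hVG'⟩
        rcases hchain.total hG hG' with hle | hle
        · exact ⟨G', hG', (hcS hG').1.2.2.1 U (hle hUG) V hVG'⟩
        · exact ⟨G, hG, (hcS hG).1.2.2.1 U hUG V (hle hVG')⟩
      · rintro U ⟨G, hG, hUG⟩ V hVo hUV
        exact ⟨G, hG, (hcS hG).1.2.2.2 U hUG V hVo hUV⟩
      · exact (hcS hc₀).2.trans (subset_sUnion_of_mem hc₀))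
    F₀ ⟨h, subset_rfl⟩
  refine ⟨F, ⟨hmax.1.1, fun G hG hFG => ?_⟩, hF₀F⟩
  exact (hmax.2 ⟨hG, hF₀F.trans hFG⟩ hFG).antisymm hFG

lemma natCast_le_mk_iff_emb {α : Type u} (k : ℕ) :
    ((k : ℕ) : Cardinal) ≤ #α ↔ Nonempty (Fin k ↪ α) := by
  constructor
  · intro h
    have h2 : #(ULift.{u} (Fin k)) ≤ #α := by
      rw [Cardinal.mk_uLift, Cardinal.mk_fin, Cardinal.lift_natCast]; exact h
    obtain ⟨e⟩ := (Cardinal.le_def _ _).mp h2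
    exact ⟨Function.Embedding.trans ⟨ULift.up, fun a b => congrArg ULift.down⟩ e⟩
  · rintro ⟨e⟩
    have h2 : #(ULift.{u} (Fin k)) ≤ #α :=
      (Cardinal.le_def _ _).mpr
        ⟨Function.Embedding.trans ⟨ULift.down, fun a b h => by
          cases a; cases b; cases h; rfl⟩ e⟩
    rwa [Cardinal.mk_uLift, Cardinal.mk_fin, Cardinal.lift_natCast] at h2

theorem stmt15 (n : ℕ) (hn : 2 ≤ n) (X : Type u) [TopologicalSpace X] :
    NHausdorff n X ↔
      ∀ F : Set (Set X), IsOpenUltrafilter F → #(adh F) ≤ (n - 1 : ℕ) := by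
  obtain ⟨m, rfl⟩ : ∃ m, n = m + 1 := ⟨n - 1, (Nat.succ_pred_eq_of_pos (by omega)).symm⟩
  simp only [Nat.add_sub_cancel]
  constructor
  · intro h F hF
    by_contra hc
    rw [not_le] at hc
    have hle : ((m + 1 : ℕ) : Cardinal) ≤ #(adh F) := by
      rw [show ((m + 1 : ℕ) : Cardinal) = Order.succ (m : Cardinal) from Cardinal.nat_succ m]
      exact Order.succ_le_of_lt hc
    obtain ⟨e⟩ := (natCast_le_mk_iff_emb (m + 1)).mp hle
    obtain ⟨U, hU, hUempty⟩ := h (e.trans (Function.Embedding.subtype _))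
    -- each U i is in F
    have hUF : ∀ i, U i ∈ F := by
      intro i
      refine openUltrafilter_mem hF (hU i).1 ?_
      intro W hW
      have hx : ((e i : adh F) : X) ∈ closure W := by
        have := (e i).2
        simp only [adh, mem_iInter] at this
        exact this W hW
      rw [inter_comm]
      exact mem_closure_iff.mp hx _ (hU i).1 (hU i).2
    have := (hF.1.2.1 _ (openFilter_iInter hF.1 m U hUF)).2
    rw [hUempty] at this
    exact this.ne_empty rfl
  · intro h f
    by_contra hc
    push_neg at hc
    -- the filter generated by intersections of neighbourhoods of the f i
    set F₀ : Set (Set X) := {W | IsOpen W ∧ ∃ U : Fin (m + 1) → Set X,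
      (∀ i, IsOpen (U i) ∧ f i ∈ U i) ∧ ⋂ i, U i ⊆ W} with hF₀def
    have hF₀ : IsOpenFilter F₀ := by
      refine ⟨⟨univ, isOpen_univ, fun _ => univ, fun i => ⟨isOpen_univ, mem_univ _⟩,
        subset_univ _⟩, ?_, ?_, ?_⟩
      · rintro W ⟨hWo, U, hU, hUW⟩
        exact ⟨hWo, (hc U hU).mono hUW⟩
      · rintro W₁ ⟨h1o, U₁, hU₁, h1⟩ W₂ ⟨h2o, U₂, hU₂, h2⟩
        refine ⟨h1o.inter h2o, fun i => U₁ i ∩ U₂ i,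
          fun i => ⟨(hU₁ i).1.inter (hU₂ i).1, (hU₁ i).2, (hU₂ i).2⟩, ?_⟩
        intro x hx
        simp only [mem_iInter, mem_inter_iff] at hx
        exact ⟨h1 (mem_iInter.mpr fun i => (hx i).1), h2 (mem_iInter.mpr fun i => (hx i).2)⟩
      · rintro W ⟨hWo, U, hU, hUW⟩ W' hW'o hWW'
        exact ⟨hW'o, U, hU, hUW.trans hWW'⟩
    obtain ⟨F, hF, hF₀F⟩ := exists_openUltrafilter hF₀
    -- each f i lies in adh F
    have hadh : ∀ i, f i ∈ adh F := by
      intro i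
      simp only [adh, mem_iInter]
      intro W hW
      by_contra hfW
      have hV : (closure W)ᶜ ∈ F₀ := by
        refine ⟨isClosed_closure.isOpen_compl, fun j => if j = i then (closure W)ᶜ else univ,
          fun j => ?_, ?_⟩
        · by_cases hji : j = i <;>
            simp [hji, isClosed_closure.isOpen_compl, hfW, isOpen_univ]
        · intro x hx
          have := mem_iInter.mp hx i
          simpa using this
      have hmem := hF.1.2.2.1 _ (hF₀F hV) _ hW
      have := (hF.1.2.1 _ hmem).2
      obtain ⟨x, hx1, hx2⟩ := this
      exact hx1 (subset_closure hx2)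
    -- get an embedding Fin (m+1) ↪ adh F
    have hemb : ((m + 1 : ℕ) : Cardinal) ≤ #(adh F) :=
      (natCast_le_mk_iff_emb (m + 1)).mpr
        ⟨⟨fun i => ⟨f i, hadh i⟩, fun i j hij => f.injective (congrArg Subtype.val hij)⟩⟩
    have hlt : ((m : ℕ) : Cardinal) < ((m + 1 : ℕ) : Cardinal) :=
      Nat.cast_lt.mpr (Nat.lt_succ_self m)
    exact ((hemb.trans (h F hF)).trans_lt hlt).false
end

section
/- Let n ≥ 2 and let X be an n-Hausdorff space. Then X is n-H-closed if and only if every open ultrafilter 𝒰 on X is full, i.e., |a𝒰| = n−1. -/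
open Set Cardinal

/-- An `n`-Hausdorff space is `n`-H-closed if it is closed in every
`n`-Hausdorff space in which it embeds. -/
def NHClosed (n : ℕ) (X : Type u) [TopologicalSpace X] : Prop :=
  NHausdorff n X ∧
  ∀ (Y : Type u) (_ : TopologicalSpace Y), NHausdorff n Y →
    ∀ e : X → Y, Topology.IsEmbedding e → IsClosed (Set.range e)

/-!
If `x ∈ a𝒰` for an open ultrafilter `𝒰`, maximality forces every open neighbourhood of `x`
into `𝒰`; so `n` points of `a𝒰` would have neighbourhoods with nonempty common intersection,
and `|a𝒰| ≤ n - 1` in any `n`-Hausdorff space. If some `|a𝒰| < n - 1`, adjoining one point whose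
neighbourhoods are generated by `𝒰` gives an `n`-Hausdorff space in which `X` is embedded but not
closed. Conversely, if `y ∉ X` lies in the closure of `X` inside an `n`-Hausdorff `Y`, the traces
on `X` of the neighbourhoods of `y` extend to an open ultrafilter `𝒰`, and `y` together with the
`n - 1` points of `a𝒰` are `n` points that cannot be separated.
-/

universe u

open Filter Topology

variable {X : Type u} [TopologicalSpace X] {F : Set (Set X)}

namespace IsOpenFilter

def toFilterBasis (hF : IsOpenFilter F) : FilterBasis X where
  sets := F
  nonempty := hF.1
  inter_sets hU hV := ⟨_, hF.2.2.1 _ hU _ hV, subset_rfl⟩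

def toFilter (hF : IsOpenFilter F) : Filter X :=
  hF.toFilterBasis.filter

theorem mem_toFilter (hF : IsOpenFilter F) {s : Set X} :
    s ∈ hF.toFilter ↔ ∃ U ∈ F, U ⊆ s :=
  hF.toFilterBasis.mem_filter_iff

theorem mem_toFilter_of_mem (hF : IsOpenFilter F) {U : Set X} (hU : U ∈ F) :
    U ∈ hF.toFilter :=
  hF.mem_toFilter.2 ⟨U, hU, subset_rfl⟩

theorem neBot_toFilter (hF : IsOpenFilter F) : hF.toFilter.NeBot :=
  forall_mem_nonempty_iff_neBot.1 fun _ hs ↦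
    let ⟨U, hU, hUs⟩ := hF.mem_toFilter.1 hs
    (hF.2.1 U hU).2.mono hUs

theorem iInter_nonempty (hF : IsOpenFilter F) {ι : Type*} [Finite ι] {V : ι → Set X}
    (hV : ∀ i, V i ∈ F) : (⋂ i, V i).Nonempty :=
  have := hF.neBot_toFilter
  nonempty_of_mem (iInter_mem.2 fun i ↦ hF.mem_toFilter_of_mem (hV i))

end IsOpenFilter

theorem isOpenFilter_openSets (f : Filter X) [f.NeBot] : IsOpenFilter {U | IsOpen U ∧ U ∈ f} :=
  ⟨⟨univ, isOpen_univ, univ_mem⟩, fun _ hU ↦ ⟨hU.1, nonempty_of_mem hU.2⟩,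
    fun _ hU _ hV ↦ ⟨hU.1.inter hV.1, inter_mem hU.2 hV.2⟩,
    fun _ hU _ hV hUV ↦ ⟨hV, mem_of_superset hU.2 hUV⟩⟩

theorem isOpenFilter_sUnion {c : Set (Set (Set X))} (hc : ∀ G ∈ c, IsOpenFilter G)
    (hchain : IsChain (· ⊆ ·) c) (hne : c.Nonempty) : IsOpenFilter (⋃₀ c) := by
  obtain ⟨G, hG⟩ := hne
  refine ⟨(hc G hG).1.mono (subset_sUnion_of_mem hG), ?_, ?_, ?_⟩
  · rintro U ⟨G, hG, hU⟩
    exact (hc G hG).2.1 U hU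
  · rintro U ⟨G₁, hG₁, hU⟩ V ⟨G₂, hG₂, hV⟩
    rcases hchain.total hG₁ hG₂ with h | h
    · exact ⟨G₂, hG₂, (hc G₂ hG₂).2.2.1 U (h hU) V hV⟩
    · exact ⟨G₁, hG₁, (hc G₁ hG₁).2.2.1 U hU V (h hV)⟩
  · rintro U ⟨G, hG, hU⟩ V hV hUV
    exact ⟨G, hG, (hc G hG).2.2.2 U hU V hV hUV⟩

theorem exists_isOpenUltrafilter_superset (hF : IsOpenFilter F) :
    ∃ G, IsOpenUltrafilter G ∧ F ⊆ G := by
  have hchains : ∀ c ⊆ {G | IsOpenFilter G ∧ F ⊆ G}, IsChain (· ⊆ ·) c → c.Nonempty →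
      ∃ H ∈ {G | IsOpenFilter G ∧ F ⊆ G}, ∀ G ∈ c, G ⊆ H := by
    intro c hc hchain hne
    obtain ⟨G, hG⟩ := hne
    refine ⟨⋃₀ c, ⟨isOpenFilter_sUnion (fun G hG ↦ (hc hG).1) hchain ⟨G, hG⟩, ?_⟩,
      fun _ ↦ subset_sUnion_of_mem⟩
    exact (hc hG).2.trans (subset_sUnion_of_mem hG)
  obtain ⟨G, hFG, hmax⟩ := zorn_subset_nonempty _ hchains F ⟨hF, subset_rfl⟩
  exact ⟨G, ⟨hmax.prop.1, fun H hH hGH ↦ (hmax.eq_of_subset ⟨hH, hFG.trans hGH⟩ hGH).symm⟩, hFG⟩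

namespace IsOpenUltrafilter

theorem mem_of_subset_filter (hF : IsOpenUltrafilter F) {f : Filter X} [f.NeBot]
    (hFf : ∀ U ∈ F, U ∈ f) {V : Set X} (hV : IsOpen V) (hVf : V ∈ f) : V ∈ F := by
  have := hF.2 _ (isOpenFilter_openSets f) fun U hU ↦ ⟨(hF.1.2.1 U hU).1, hFf U hU⟩
  exact this ▸ ⟨hV, hVf⟩

theorem mem_of_mem_adh (hF : IsOpenUltrafilter F) {x : X} (hx : x ∈ adh F) {V : Set X}
    (hV : IsOpen V) (hxV : x ∈ V) : V ∈ F := by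
  have : (hF.1.toFilter ⊓ 𝓟 V).NeBot := inf_principal_neBot_iff.2 fun s hs ↦ by
    obtain ⟨U, hU, hUs⟩ := hF.1.mem_toFilter.1 hs
    have hxU : x ∈ closure U := mem_iInter₂.1 hx U hU
    obtain ⟨z, hzV, hzU⟩ := mem_closure_iff.1 hxU V hV hxV
    exact ⟨z, hUs hzU, hzV⟩
  exact hF.mem_of_subset_filter (fun U hU ↦ mem_inf_of_left (hF.1.mem_toFilter_of_mem hU)) hV
    (mem_inf_of_right (mem_principal_self V))

theorem mk_adh_lt {n : ℕ} (hF : IsOpenUltrafilter F) (hX : NHausdorff n X) : #(adh F) < n := by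
  by_contra! h
  obtain ⟨p⟩ : Nonempty (Fin n ↪ adh F) := Cardinal.lift_mk_le'.1 (by simpa using h)
  obtain ⟨U, hU, hUempty⟩ := hX (p.trans (Function.Embedding.subtype _))
  have := hF.1.iInter_nonempty fun i ↦ hF.mem_of_mem_adh (p i).2 (hU i).1 (hU i).2
  rw [hUempty] at this
  exact not_nonempty_empty this

end IsOpenUltrafilter

theorem exists_apply_notMem_of_mk_lt {α : Type*} {n : ℕ} (f : Fin n ↪ α) {s : Set α}
    (hs : #s < n) : ∃ i, f i ∉ s := by
  by_contra! h
  have := lift_mk_le_lift_mk_of_injective (f := codRestrict f s h)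
    (f.injective.codRestrict h)
  simp only [mk_fin, lift_natCast, lift_uzero] at this
  exact this.not_gt hs

theorem exists_isOpen_iInter_eq_empty_of_disjoint {Y ι : Type*} [TopologicalSpace Y]
    (f : ι → Y) {i j : ι} (hij : i ≠ j) {A B : Set Y} (hA : IsOpen A) (hB : IsOpen B)
    (hiA : f i ∈ A) (hjB : f j ∈ B) (hAB : Disjoint A B) :
    ∃ U : ι → Set Y, (∀ k, IsOpen (U k) ∧ f k ∈ U k) ∧ ⋂ k, U k = ∅ := by
  classical
  refine ⟨fun k ↦ if k = i then A else if k = j then B else univ, fun k ↦ ?_, ?_⟩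
  · dsimp only
    split_ifs with hki hkj
    · exact ⟨hA, hki ▸ hiA⟩
    · exact ⟨hB, hkj ▸ hjB⟩
    · exact ⟨isOpen_univ, mem_univ _⟩
  · refine eq_empty_iff_forall_notMem.2 fun y hy ↦ ?_
    have hyA : y ∈ A := by simpa using mem_iInter.1 hy i
    have hyB : y ∈ B := by simpa [hij.symm] using mem_iInter.1 hy j
    exact Set.disjoint_left.1 hAB hyA hyB

/-- `none` is the adjoined point; its open neighbourhoods are those whose trace on `X` lies in
the filter generated by `F`. -/
abbrev extensionTopology (hF : IsOpenFilter F) : TopologicalSpace (Option X) :=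
  .coinduced some ‹_› ⊔ nhdsAdjoint none (map some hF.toFilter)

theorem isOpen_extensionTopology_iff (hF : IsOpenFilter F) {O : Set (Option X)} :
    IsOpen[extensionTopology hF] O ↔
      IsOpen (some ⁻¹' O) ∧ (none ∈ O → some ⁻¹' O ∈ hF.toFilter) :=
  Iff.rfl

section extensionTopology

variable (hF : IsOpenFilter F)

theorem isOpen_image_some {U : Set X} (hU : IsOpen U) :
    IsOpen[extensionTopology hF] (some '' U) := by
  rw [isOpen_extensionTopology_iff, preimage_image_eq _ (Option.some_injective X)]
  exact ⟨hU, fun h ↦ by simp at h⟩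

theorem isOpen_insert_none_image_some {U : Set X} (hU : U ∈ F) :
    IsOpen[extensionTopology hF] (insert none (some '' U)) := by
  have hpre : some ⁻¹' insert none (some '' U) = U := by ext; simp
  rw [isOpen_extensionTopology_iff, hpre]
  exact ⟨(hF.2.1 U hU).1, fun _ ↦ hF.mem_toFilter_of_mem hU⟩

theorem isEmbedding_some : @IsEmbedding X (Option X) _ (extensionTopology hF) some :=
  letI := extensionTopology hF
  (IsOpenEmbedding.of_continuous_injective_isOpenMap
    (continuous_def.2 fun _ hO ↦ ((isOpen_extensionTopology_iff hF).1 hO).1)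
    (Option.some_injective X) fun _ ↦ isOpen_image_some hF).isEmbedding

theorem not_isClosed_range_some : ¬IsClosed[extensionTopology hF] (range some) := by
  intro h
  have hempty := ((isOpen_extensionTopology_iff hF).1 h.isOpen_compl).2 (by simp)
  have hpre : some ⁻¹' (range some)ᶜ = (∅ : Set X) := by ext; simp
  rw [hpre] at hempty
  exact hF.neBot_toFilter.ne (empty_mem_iff_bot.1 hempty)

theorem nhausdorff_extensionTopology {n : ℕ} (hX : NHausdorff n X)
    (hsmall : #(adh F) + 1 < n) : @NHausdorff n (Option X) (extensionTopology hF) := by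
  let _ := extensionTopology hF
  intro f
  by_cases hnone : none ∈ range f
  · obtain ⟨i, hi⟩ := hnone
    have hcard : #(insert none (some '' adh F) : Set (Option X)) < n :=
      mk_insert_le.trans_lt (lt_of_le_of_lt (by gcongr; exact mk_image_le) hsmall)
    -- some other point `some x` lies outside `adh F`, and is separated from `none` by a
    -- member `U` of `F` with `x ∉ closure U`
    obtain ⟨j, hj⟩ := exists_apply_notMem_of_mk_lt f hcard
    rw [mem_insert_iff, not_or] at hj
    obtain ⟨x, hx⟩ := Option.ne_none_iff_exists'.1 hj.1
    have hxadh : x ∉ adh F := fun h ↦ hj.2 (hx ▸ mem_image_of_mem some h)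
    simp only [adh, mem_iInter₂, not_forall] at hxadh
    obtain ⟨U, hU, hxU⟩ := hxadh
    refine exists_isOpen_iInter_eq_empty_of_disjoint f (i := i) (j := j)
      (fun hij ↦ hj.1 (hij ▸ hi))
      (isOpen_insert_none_image_some hF hU) (isOpen_image_some hF isClosed_closure.isOpen_compl)
      (hi ▸ mem_insert _ _) (by rw [hx]; exact mem_image_of_mem some hxU) ?_
    rw [disjoint_insert_left, disjoint_image_iff (Option.some_injective X)]
    exact ⟨by simp, disjoint_compl_right_iff_subset.2 subset_closure⟩
  · choose x hx using fun k ↦ Option.ne_none_iff_exists'.1 fun h ↦ hnone ⟨k, h⟩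
    have hxinj : Function.Injective x := fun a b h ↦ f.injective (by rw [hx a, hx b, h])
    obtain ⟨U, hU, hUempty⟩ := hX ⟨x, hxinj⟩
    have : Nonempty (Fin n) :=
      Fin.pos_iff_nonempty.1 (Nat.cast_pos.1 (pos_of_gt hsmall))
    refine ⟨fun k ↦ some '' U k, fun k ↦ ⟨isOpen_image_some hF (hU k).1, ?_⟩, ?_⟩
    · rw [hx k]
      exact mem_image_of_mem _ (hU k).2
    · rw [← (Option.some_injective X).injOn.image_iInter_eq, hUempty, image_empty]

end extensionTopology

theorem IsOpenUltrafilter.mk_adh_eq_of_nhClosed {n : ℕ} (hX : NHClosed n X)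
    (hF : IsOpenUltrafilter F) : #(adh F) = (n - 1 : ℕ) := by
  obtain ⟨m, -, hm⟩ := exists_nat_eq_of_le_nat (hF.mk_adh_lt hX.1).le
  have hmn : m < n := by exact_mod_cast hm ▸ hF.mk_adh_lt hX.1
  rw [hm, Nat.cast_inj]
  by_contra hne
  have hsmall : #(adh F) + 1 < n := by rw [hm]; exact_mod_cast (by omega : m + 1 < n)
  exact not_isClosed_range_some hF.1 <| hX.2 _ _
    (nhausdorff_extensionTopology hF.1 hX.1 hsmall) some (isEmbedding_some hF.1)

theorem nhClosed_of_forall_mk_adh_eq {n : ℕ} (hn : 0 < n) (hX : NHausdorff n X)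
    (h : ∀ F : Set (Set X), IsOpenUltrafilter F → #(adh F) = (n - 1 : ℕ)) : NHClosed n X := by
  refine ⟨hX, fun Y _ hY e he ↦ isClosed_of_closure_subset fun y hy ↦ ?_⟩
  by_contra hye
  have : (comap e (𝓝 y)).NeBot := comap_neBot fun t ht ↦
    let ⟨_, hzt, x, hx⟩ := mem_closure_iff_nhds.1 hy t ht
    ⟨x, hx ▸ hzt⟩
  obtain ⟨F, hF, hsub⟩ :=
    exists_isOpenUltrafilter_superset (isOpenFilter_openSets (comap e (𝓝 y)))
  obtain ⟨m, rfl⟩ : ∃ m, n = m + 1 := ⟨n - 1, by omega⟩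
  obtain ⟨g⟩ : Nonempty (adh F ≃ Fin m) := mk_eq_nat_iff.1 (by simpa using h F hF)
  let p : Fin m ↪ Y := (g.symm.toEmbedding.trans (Function.Embedding.subtype _)).trans
    ⟨e, he.injective⟩
  obtain ⟨V, hV, hVempty⟩ := hY (Fin.Embedding.cons p (a := y) fun ⟨i, hi⟩ ↦ hye ⟨_, hi⟩)
  have hmem : ∀ i, e ⁻¹' V i ∈ F := Fin.cases
    (hsub ⟨(hV 0).1.preimage he.continuous, preimage_mem_comap ((hV 0).1.mem_nhds (hV 0).2)⟩)
    fun i ↦ hF.mem_of_mem_adh (g.symm i).2 ((hV _).1.preimage he.continuous) (hV i.succ).2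
  obtain ⟨x, hx⟩ := hF.1.iInter_nonempty hmem
  rw [← preimage_iInter, hVempty] at hx
  exact hx

theorem stmt16 (n : ℕ) (hn : 2 ≤ n) (X : Type u) [TopologicalSpace X]
    (hX : NHausdorff n X) :
    NHClosed n X ↔
      ∀ F : Set (Set X), IsOpenUltrafilter F → #(adh F) = (n - 1 : ℕ) :=
  ⟨fun hX' _ hF ↦ hF.mk_adh_eq_of_nhClosed hX', nhClosed_of_forall_mk_adh_eq (by omega) hX⟩
end

section
/- Let n ≥ 2, X an n-Hausdorff space, and h : X → X a homeomorphism. Then there is a homeomorphism n-kh : n-kX → n-kX of the n-Katětov extension n-kX of X that extends h. -/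
/-!
A homeomorphism `e : X ≃ₜ Y` carries open ultrafilters on `X` to open ultrafilters on `Y` and
their adherences onto each other, so it matches the indices of added points together with the
sizes of their fibres. Since the topology of `n-kX` is described entirely through the open sets
of `X` and these ultrafilters, the resulting bijection `n-kX ≃ n-kY` is continuous, and so is its
inverse, which is the bijection induced by `e.symm`.
-/

open Set Cardinal

/-- Index set of the added points: open ultrafilters `F` with `|a F| < n - 1`
(so finitely many points in `a F`). -/
def KIndex (n : ℕ) (X : Type u) [TopologicalSpace X] : Type u :=
  {F : Set (Set X) // IsOpenUltrafilter F ∧ #(adh F) < (n - 1 : ℕ)}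

/-- The underlying set of the `n`-Katětov extension `n-kX` of `X`: the points
of `X` together with, for each open ultrafilter `F` with `|a F| < n - 1`,
`(n - 1) - |a F|` new points. -/
def KatetovExt (n : ℕ) (X : Type u) [TopologicalSpace X] : Type u :=
  X ⊕ (Σ F : KIndex n X, Fin (n - 1 - (adh F.1).ncard))

/-- The topology of `n-kX`: `V` is open iff `V ∩ X` is open in `X` and,
whenever an added point `p_{F,i}` lies in `V`, `V ∩ X ∈ F`. -/
instance (n : ℕ) (X : Type u) [TopologicalSpace X] :
    TopologicalSpace (KatetovExt n X) where
  IsOpen V := IsOpen (Sum.inl ⁻¹' V : Set X) ∧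
    ∀ (F : KIndex n X) (i), (Sum.inr ⟨F, i⟩ : KatetovExt n X) ∈ V →
      (Sum.inl ⁻¹' V : Set X) ∈ F.1
  isOpen_univ := by
    refine ⟨isOpen_univ, fun F i _ => ?_⟩
    obtain ⟨⟨⟨U, hU⟩, hmem, _, hup⟩, _⟩ := F.2.1
    exact hup U hU univ isOpen_univ (subset_univ U)
  isOpen_inter := by
    rintro V W ⟨hV, hV'⟩ ⟨hW, hW'⟩
    refine ⟨hV.inter hW, fun F i hi => ?_⟩
    obtain ⟨⟨_, _, hinter, _⟩, _⟩ := F.2.1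
    exact hinter _ (hV' F i hi.1) _ (hW' F i hi.2)
  isOpen_sUnion := by
    intro S hS
    constructor
    · erw [preimage_sUnion]
      exact isOpen_biUnion fun V hV => (hS V hV).1
    · rintro F i hi
      obtain ⟨V, hVS, hiV⟩ := hi
      obtain ⟨⟨_, _, _, hup⟩, _⟩ := F.2.1
      refine hup _ ((hS V hVS).2 F i hiV) _ ?_ ?_
      · erw [preimage_sUnion]
        exact isOpen_biUnion fun W hW => (hS W hW).1
      · exact fun x hx => ⟨V, hVS, hx⟩

/-- For a bijection `g` this is `{g '' V | V ∈ F}`. -/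
def mapFilter {α β : Type*} (g : α → β) (F : Set (Set α)) : Set (Set β) := {U | g ⁻¹' U ∈ F}

lemma mapFilter_mapFilter {α β γ : Type*} (f : α → β) (g : β → γ) (F : Set (Set α)) :
    mapFilter g (mapFilter f F) = mapFilter (g ∘ f) F := rfl

lemma mapFilter_id {α : Type*} (F : Set (Set α)) : mapFilter id F = F := rfl

noncomputable section KatetovFunctoriality

variable {n : ℕ} {X Y : Type u} [TopologicalSpace X] [TopologicalSpace Y]

lemma mapFilter_symm_mapFilter (e : X ≃ₜ Y) (F : Set (Set X)) :
    mapFilter e.symm (mapFilter e F) = F := by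
  rw [mapFilter_mapFilter, e.symm_comp_self, mapFilter_id]

lemma mapFilter_mapFilter_symm (e : X ≃ₜ Y) (G : Set (Set Y)) :
    mapFilter e (mapFilter e.symm G) = G := by
  rw [mapFilter_mapFilter, e.self_comp_symm, mapFilter_id]

lemma IsOpenFilter.map {F : Set (Set X)} (hF : IsOpenFilter F) (e : X ≃ₜ Y) :
    IsOpenFilter (mapFilter e F) := by
  obtain ⟨⟨W, hW⟩, hopen, hinter, hup⟩ := hF
  refine ⟨⟨univ, hup W hW univ isOpen_univ (subset_univ W)⟩, fun U hU => ⟨?_, ?_⟩,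
    fun U hU V hV => hinter _ hU _ hV,
    fun U hU V hV hUV => hup _ hU _ (hV.preimage e.continuous) (preimage_mono hUV)⟩
  · exact e.isOpen_preimage.mp (hopen _ hU).1
  · obtain ⟨x, hx⟩ := (hopen _ hU).2
    exact ⟨e x, hx⟩

lemma IsOpenUltrafilter.map {F : Set (Set X)} (hF : IsOpenUltrafilter F) (e : X ≃ₜ Y) :
    IsOpenUltrafilter (mapFilter e F) := by
  refine ⟨hF.1.map e, fun G hG hFG => ?_⟩
  have hback : mapFilter e.symm G = F :=
    hF.2 _ (hG.map e.symm) fun U hU => by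
      rw [← mapFilter_symm_mapFilter e F] at hU
      exact hFG hU
  rw [← hback, mapFilter_mapFilter_symm]

lemma adh_mapFilter (e : X ≃ₜ Y) (F : Set (Set X)) :
    adh (mapFilter e F) = e '' adh F := by
  ext y
  rw [← e.preimage_symm]
  simp only [adh, mapFilter, mem_iInter, mem_preimage, mem_ofPred_eq]
  constructor
  · intro hy U hU
    have := hy (e.symm ⁻¹' U) (by rwa [e.preimage_symm, e.preimage_image])
    rwa [← e.symm.preimage_closure] at this
  · intro hy V hV
    simpa [← e.preimage_closure] using hy _ hV

def KIndex.congr (n : ℕ) (e : X ≃ₜ Y) : KIndex n X ≃ KIndex n Y where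
  toFun F := ⟨mapFilter e F.1, F.2.1.map e, by
    rw [adh_mapFilter, mk_image_eq e.injective]; exact F.2.2⟩
  invFun F := ⟨mapFilter e.symm F.1, F.2.1.map e.symm, by
    rw [adh_mapFilter, mk_image_eq e.symm.injective]; exact F.2.2⟩
  left_inv F := Subtype.ext (mapFilter_symm_mapFilter e F.1)
  right_inv F := Subtype.ext (mapFilter_symm_mapFilter e.symm F.1)

lemma ncard_adh_kIndexCongr (e : X ≃ₜ Y) (F : KIndex n X) :
    (adh (KIndex.congr n e F).1).ncard = (adh F.1).ncard :=
  (congrArg ncard (adh_mapFilter e F.1)).trans (ncard_image_of_injective _ e.injective)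

def KatetovExt.congr (n : ℕ) (e : X ≃ₜ Y) : KatetovExt n X ≃ KatetovExt n Y :=
  Equiv.sumCongr e.toEquiv <| Equiv.sigmaCongr (KIndex.congr n e) fun F =>
    finCongr (by rw [ncard_adh_kIndexCongr])

lemma KatetovExt.continuous_of_map_inl_of_map_inr (e : X ≃ₜ Y)
    {f : KatetovExt n X → KatetovExt n Y} (hinl : ∀ x, f (.inl x) = .inl (e x))
    (hinr : ∀ F i, ∃ j, f (.inr ⟨F, i⟩) = .inr ⟨KIndex.congr n e F, j⟩) : Continuous f := by
  rw [continuous_def]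
  rintro V ⟨hVX, hVF⟩
  have hpre : (Sum.inl ⁻¹' (f ⁻¹' V) : Set X) = e ⁻¹' (Sum.inl ⁻¹' V) := by
    ext x
    exact iff_of_eq (congrArg (· ∈ V) (hinl x))
  refine ⟨hpre ▸ hVX.preimage e.continuous, fun F i hi => ?_⟩
  obtain ⟨j, hj⟩ := hinr F i
  have hi' : f (.inr ⟨F, i⟩) ∈ V := hi
  rw [hj] at hi'
  exact hpre ▸ hVF _ j hi'

def Homeomorph.katetovExt (n : ℕ) (e : X ≃ₜ Y) : KatetovExt n X ≃ₜ KatetovExt n Y where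
  toEquiv := KatetovExt.congr n e
  continuous_toFun :=
    KatetovExt.continuous_of_map_inl_of_map_inr e (fun _ => rfl) fun _ _ => ⟨_, rfl⟩
  continuous_invFun :=
    KatetovExt.continuous_of_map_inl_of_map_inr e.symm (fun _ => rfl) fun _ _ => ⟨_, rfl⟩

end KatetovFunctoriality

theorem stmt18_general (n : ℕ) (X : Type u) [TopologicalSpace X] (h : X ≃ₜ X) :
    ∃ H : KatetovExt n X ≃ₜ KatetovExt n X,
      ∀ x : X, H (Sum.inl x) = Sum.inl (h x) :=
  ⟨h.katetovExt n, fun _ => rfl⟩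

theorem stmt18 (n : ℕ) (hn : 2 ≤ n) (X : Type u) [TopologicalSpace X]
    (hX : NHausdorff n X) (h : X ≃ₜ X) :
    ∃ H : KatetovExt n X ≃ₜ KatetovExt n X,
      ∀ x : X, H (Sum.inl x) = Sum.inl (h x) :=
  stmt18_general n X h
end
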